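/- arXiv:1809.07652 — 2 statements merged into one kernel-verified Lean document; each statement's English description precedes it below -/
import Mathlib

section
/- For a fixed real number c, the product f ⋆_c g := ∑_{n≥0} (c^n / n!) · f⁽ⁿ⁾ · g⁽ⁿ⁾ on the polynomial ring ℝ[X] is associative: (f ⋆_c g) ⋆_c h = f ⋆_c (g ⋆_c h) for all polynomials f, g, h. -/
open Polynomial

/-- The exponential (Wick/Moyal-type) product on `ℝ[X]` with kernel `c`:
`f ⋆_c g = ∑ₙ (cⁿ/n!) f⁽ⁿ⁾ g⁽ⁿ⁾` (a finite sum). -/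
noncomputable def starProd (c : ℝ) (f g : Polynomial ℝ) : Polynomial ℝ :=
  ∑ n ∈ Finset.range (f.natDegree + g.natDegree + 1),
    (c ^ n / (n.factorial : ℝ)) • ((⇑derivative)^[n] f * (⇑derivative)^[n] g)

/-!
Expanding with the Leibniz rule turns `(f ⋆ g) ⋆ h` into the Wick formula
`∑_{i,j,k} c^(i+j+k) / (i! j! k!) • f^(i+k) g^(j+k) h^(i+j)`, where `i`, `j`, `k` count the
contractions of the pairs `(f, h)`, `(g, h)`, `(f, g)`. This sum is invariant under exchanging
`f` and `h`, and `⋆` is commutative, so `f ⋆ (g ⋆ h) = (h ⋆ g) ⋆ f` gives the same sum.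
-/

open Finset

theorem Finset.sum_range_sum_antidiagonal_eq_sum_range_sum_range {M : Type*} [AddCommMonoid M]
    {N : ℕ} (F : ℕ → ℕ → M) (hF : ∀ a b, N ≤ a + b → F a b = 0) :
    ∑ m ∈ range N, ∑ p ∈ antidiagonal m, F p.1 p.2 = ∑ a ∈ range N, ∑ b ∈ range N, F a b := by
  have fiber : ∀ m ∈ range N,
      antidiagonal m = (range N ×ˢ range N).filter (fun p => p.1 + p.2 = m) := by
    intro m hm
    ext p
    simp only [HasAntidiagonal.mem_antidiagonal, mem_filter, mem_product, mem_range] at hm ⊢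
    omega
  rw [sum_congr rfl fun m hm => by rw [fiber m hm], sum_fiberwise_eq_sum_filter,
    sum_filter_of_ne, sum_product]
  intro p _ hp
  by_contra hlt
  exact hp (hF p.1 p.2 (by simpa using hlt))

theorem pow_div_factorial_mul_pow_div_factorial_mul_choose {K : Type*} [Field K] [CharZero K]
    (c : K) (a b n : ℕ) :
    c ^ (a + b) / (a + b).factorial * (c ^ n / n.factorial) * (a + b).choose b =
      c ^ (a + b + n) / (a.factorial * b.factorial * n.factorial) := by
  rw [← Nat.add_choose_mul_factorial_mul_factorial a b]
  push_cast
  have : ((a + b).choose b : K) ≠ 0 := Nat.cast_ne_zero.mpr ((a + b).choose_pos le_add_self).ne'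
  field_simp
  ring

namespace Polynomial

theorem iterate_derivative_mul_eq_sum_antidiagonal {R : Type*} [CommSemiring R] (n : ℕ)
    (p q : R[X]) :
    derivative^[n] (p * q) =
      ∑ ij ∈ antidiagonal n, n.choose ij.2 • (derivative^[ij.1] p * derivative^[ij.2] q) := by
  rw [iterate_derivative_mul, ← Nat.sum_antidiagonal_eq_sum_range_succ
    (fun i j => n.choose i • (derivative^[j] p * derivative^[i] q)), ← Nat.sum_antidiagonal_swap]
  rfl

end Polynomial

theorem starProd_comm (c : ℝ) (f g : ℝ[X]) : starProd c f g = starProd c g f := by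
  rw [starProd, starProd, add_comm f.natDegree]
  exact sum_congr rfl fun n _ => by rw [mul_comm (derivative^[n] f)]

theorem starProd_eq_sum_range (c : ℝ) (f g : ℝ[X]) {N : ℕ}
    (hN : f.natDegree < N ∨ g.natDegree < N) :
    starProd c f g =
      ∑ n ∈ range N, (c ^ n / n.factorial) • (derivative^[n] f * derivative^[n] g) := by
  have vanish : ∀ n ≥ min f.natDegree g.natDegree + 1,
      (c ^ n / n.factorial) • (derivative^[n] f * derivative^[n] g) = 0 := by
    intro n hn
    rcases le_or_gt n f.natDegree with hf | hf
    · rw [iterate_derivative_eq_zero (p := g) (by omega), mul_zero, smul_zero]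
    · rw [iterate_derivative_eq_zero hf, zero_mul, smul_zero]
  rw [starProd, eventually_constant_sum vanish (by omega),
    eventually_constant_sum vanish (n := N) (by omega)]

noncomputable def wickTerm (c : ℝ) (f g h : ℝ[X]) (i j k : ℕ) : ℝ[X] :=
  (c ^ (i + j + k) / (i.factorial * j.factorial * k.factorial)) •
    (derivative^[i + k] f * derivative^[j + k] g * derivative^[i + j] h)

noncomputable def wickSum (c : ℝ) (N : ℕ) (f g h : ℝ[X]) : ℝ[X] :=
  ∑ i ∈ range N, ∑ j ∈ range N, ∑ k ∈ range N, wickTerm c f g h i j k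

theorem wickTerm_swap (c : ℝ) (f g h : ℝ[X]) (i j k : ℕ) :
    wickTerm c h g f i j k = wickTerm c f g h i k j := by
  simp only [wickTerm]
  rw [add_right_comm i j k, mul_right_comm (i.factorial : ℝ), add_comm j k]
  congr 1
  ring

theorem wickSum_swap (c : ℝ) (N : ℕ) (f g h : ℝ[X]) : wickSum c N h g f = wickSum c N f g h := by
  simp only [wickSum, wickTerm_swap c f g h]
  exact sum_congr rfl fun i _ => sum_comm

theorem starProd_starProd_eq_wickSum (c : ℝ) (f g h : ℝ[X]) {N : ℕ} (hf : f.natDegree < N)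
    (hh : h.natDegree < N) : starProd c (starProd c f g) h = wickSum c N f g h := by
  rw [starProd_eq_sum_range c _ h (Or.inr hh), starProd_eq_sum_range c f g (Or.inl hf)]
  simp only [iterate_derivative_sum, iterate_derivative_smul,
    iterate_derivative_mul_eq_sum_antidiagonal, ← Function.iterate_add_apply, smul_sum, sum_mul,
    smul_mul_assoc]
  calc _ = ∑ m ∈ range N, ∑ n ∈ range N, ∑ p ∈ antidiagonal m, wickTerm c f g h p.1 p.2 n := by
        refine sum_congr rfl fun m _ => sum_congr rfl fun n _ => sum_congr rfl fun p hp => ?_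
        rw [HasAntidiagonal.mem_antidiagonal] at hp
        subst hp
        rw [wickTerm, ← Nat.cast_smul_eq_nsmul ℝ, smul_smul, smul_smul,
          pow_div_factorial_mul_pow_div_factorial_mul_choose]
    _ = ∑ n ∈ range N, ∑ m ∈ range N, ∑ p ∈ antidiagonal m, wickTerm c f g h p.1 p.2 n :=
        sum_comm
    _ = ∑ n ∈ range N, ∑ i ∈ range N, ∑ j ∈ range N, wickTerm c f g h i j n := by
        refine sum_congr rfl fun n _ => sum_range_sum_antidiagonal_eq_sum_range_sum_range
          (fun i j => wickTerm c f g h i j n) ?_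
        intro i j hij
        rw [wickTerm, iterate_derivative_eq_zero (hh.trans_le hij), mul_zero, smul_zero]
    _ = wickSum c N f g h := by
        rw [wickSum, sum_comm]
        exact sum_congr rfl fun i _ => sum_comm

theorem starProd_assoc (c : ℝ) (f g h : Polynomial ℝ) :
    starProd c (starProd c f g) h = starProd c f (starProd c g h) := by
  set N := f.natDegree + g.natDegree + h.natDegree + 1
  calc starProd c (starProd c f g) h = wickSum c N f g h :=
        starProd_starProd_eq_wickSum c f g h (by omega) (by omega)
    _ = wickSum c N h g f := (wickSum_swap c N f g h).symm
    _ = starProd c (starProd c h g) f :=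
        (starProd_starProd_eq_wickSum c h g f (by omega) (by omega)).symm
    _ = starProd c f (starProd c g h) := by rw [starProd_comm c h g, starProd_comm]
end

section
/- For real numbers c, c', define the linear map α : ℝ[X] → ℝ[X] by α(f) := ∑_{n≥0} ((c' − c)^n / (2^n n!)) f⁽²ⁿ⁾ (a finite sum), and the products f ⋆_c g := ∑_{n≥0} (c^n/n!) f⁽ⁿ⁾ g⁽ⁿ⁾ and similarly ⋆_{c'}. Then α is an algebra isomorphism from (ℝ[X], ⋆_c) to (ℝ[X], ⋆_{c'}), i.e. α is bijective and α(f ⋆_c g) = α(f) ⋆_{c'} α(g) for all polynomials f, g. -/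
open Polynomial

/-- The intertwining map `α = exp(Υ_{c'−c})`:
`α(f) = ∑ₙ ((c'−c)ⁿ/(2ⁿ n!)) f⁽²ⁿ⁾` (a finite sum). -/
noncomputable def alphaMap (c c' : ℝ) (f : Polynomial ℝ) : Polynomial ℝ :=
  ∑ n ∈ Finset.range (f.natDegree + 1),
    ((c' - c) ^ n / (2 ^ n * (n.factorial : ℝ))) • (⇑derivative)^[2 * n] f

/-!
Write `D` for the derivative, `D₁, D₂` for the derivatives of the two factors of
`ℝ[X] ⊗ ℝ[X]` and `m` for multiplication. With `t = c' - c`, all exponentials below being finite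
sums on polynomials, `f ⋆_c g = m (exp (c D₁D₂) (f ⊗ g))` and `α = exp (t/2 D²)`. The Leibniz rule
`D ∘ m = m ∘ (D₁ + D₂)` moves `α` past `m` as `exp (t/2 (D₁ + D₂)²)`, and since `D₁, D₂` commute,
`exp (t/2 (D₁ + D₂)²) exp (c D₁D₂) = exp (c' D₁D₂) exp (t/2 D₁²) exp (t/2 D₂²)`,
whose last two factors act on `f ⊗ g` as `α f ⊗ α g`. Truncating every exponential after
`deg f + deg g` terms is harmless because each exponent is homogeneous of order two in `D₁, D₂`.
Finally `α` is invertible with inverse `exp (-t/2 D²)`.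
-/

open Finset TensorProduct

noncomputable section

section TruncExp

variable {𝕜 M M' : Type*} [Field 𝕜] [AddCommGroup M] [Module 𝕜 M] [AddCommGroup M']
  [Module 𝕜 M']

def truncExp (A : Module.End 𝕜 M) (N : ℕ) : Module.End 𝕜 M :=
  ∑ k ∈ range N, (k.factorial : 𝕜)⁻¹ • A ^ k

theorem truncExp_apply (A : Module.End 𝕜 M) (N : ℕ) (x : M) :
    truncExp A N x = ∑ k ∈ range N, (k.factorial : 𝕜)⁻¹ • (A ^ k) x := by
  simp [truncExp, LinearMap.sum_apply]

theorem truncExp_apply_eq_of_le {A : Module.End 𝕜 M} {N N' : ℕ} {x : M} (hN : N ≤ N')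
    (hx : ∀ k, N ≤ k → (A ^ k) x = 0) : truncExp A N' x = truncExp A N x := by
  rw [truncExp_apply, truncExp_apply]
  refine (sum_subset (range_subset_range.2 hN) fun k _ hk => ?_).symm
  rw [hx k (by simpa using hk), smul_zero]

theorem truncExp_zero {N : ℕ} (hN : 0 < N) : truncExp (0 : Module.End 𝕜 M) N = 1 := by
  rw [truncExp, sum_eq_single_of_mem 0 (mem_range.2 hN) fun k _ hk => by
    rw [zero_pow hk, smul_zero]]
  simp

theorem map_truncExp (φ : Module.End 𝕜 M →ₐ[𝕜] Module.End 𝕜 M') (A : Module.End 𝕜 M) (N : ℕ) :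
    φ (truncExp A N) = truncExp (φ A) N := by
  simp [truncExp, map_sum, map_smul, map_pow]

theorem truncExp_rTensor (A : Module.End 𝕜 M) (N : ℕ) :
    truncExp (A.rTensor M') N = (truncExp A N).rTensor M' :=
  (map_truncExp (Module.End.rTensorAlgHom 𝕜 M M') A N).symm

theorem truncExp_lTensor (A : Module.End 𝕜 M) (N : ℕ) :
    truncExp (A.lTensor M') N = (truncExp A N).lTensor M' :=
  (map_truncExp (Module.End.lTensorAlgHom 𝕜 M M') A N).symm

theorem truncExp_apply_of_comp_eq {A : Module.End 𝕜 M} {B : Module.End 𝕜 M'}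
    {g : M →ₗ[𝕜] M'} (h : B ∘ₗ g = g ∘ₗ A) (N : ℕ) (x : M) :
    truncExp B N (g x) = g (truncExp A N x) := by
  have hpow (k : ℕ) : (B ^ k) (g x) = g ((A ^ k) x) :=
    LinearMap.congr_fun (Module.End.commute_pow_left_of_commute h k) x
  simp only [truncExp_apply, hpow, map_sum, map_smul]

theorem truncExp_add_apply [CharZero 𝕜] {A B : Module.End 𝕜 M} (h : Commute A B) {N : ℕ} {x : M}
    (hx : ∀ i j, N ≤ i + j → (A ^ i * B ^ j) x = 0) :
    truncExp (A + B) N x = truncExp A N (truncExp B N x) := by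
  set F : ℕ → ℕ → M := fun i j => ((i.factorial : 𝕜)⁻¹ * (j.factorial : 𝕜)⁻¹) • (A ^ i * B ^ j) x
  have binomial (k : ℕ) :
      (k.factorial : 𝕜)⁻¹ • ((A + B) ^ k) x = ∑ i ∈ range (k + 1), F i (k - i) := by
    rw [h.add_pow, LinearMap.sum_apply, smul_sum]
    refine sum_congr rfl fun i hi => ?_
    rw [Module.End.mul_apply, Module.End.natCast_apply, map_nsmul, ← Nat.cast_smul_eq_nsmul 𝕜,
      smul_smul, Nat.cast_choose 𝕜 (Nat.lt_succ_iff.1 (mem_range.1 hi))]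
    have hk : (k.factorial : 𝕜) ≠ 0 := Nat.cast_ne_zero.2 k.factorial_ne_zero
    congr 1
    field_simp
  calc truncExp (A + B) N x = ∑ k ∈ range N, ∑ i ∈ range (k + 1), F i (k - i) := by
        rw [truncExp_apply]
        exact sum_congr rfl fun k _ => binomial k
    _ = ∑ i ∈ range N, ∑ j ∈ range (N - i), F i j := sum_range_diag_flip N F
    _ = ∑ i ∈ range N, ∑ j ∈ range N, F i j := by
        refine sum_congr rfl fun i _ => sum_subset (range_subset_range.2 (Nat.sub_le N i))
          fun j _ hj => ?_
        simp only [mem_range, not_lt] at hj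
        simp only [F, hx i j (by omega), smul_zero]
    _ = truncExp A N (truncExp B N x) := by
        rw [truncExp_apply, truncExp_apply]
        refine sum_congr rfl fun i _ => ?_
        rw [map_sum, smul_sum]
        refine sum_congr rfl fun j _ => ?_
        rw [map_smul, smul_smul]
        rfl

end TruncExp

section HomogeneousSpan

variable (R : Type*) {A : Type*} [CommSemiring R] [Semiring A] [Algebra R A]

def homogeneousSpan (P Q : A) (m : ℕ) : Submodule R A :=
  Submodule.span R {x | ∃ a b, a + b = m ∧ x = P ^ a * Q ^ b}

variable {R} {P Q : A}

theorem pow_mul_pow_mem_homogeneousSpan {a b m : ℕ} (h : a + b = m) :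
    P ^ a * Q ^ b ∈ homogeneousSpan R P Q m :=
  Submodule.subset_span ⟨a, b, h, rfl⟩

theorem left_mem_homogeneousSpan : P ∈ homogeneousSpan R P Q 1 := by
  simpa using pow_mul_pow_mem_homogeneousSpan (R := R) (P := P) (Q := Q) (add_zero 1)

theorem right_mem_homogeneousSpan : Q ∈ homogeneousSpan R P Q 1 := by
  simpa using pow_mul_pow_mem_homogeneousSpan (R := R) (P := P) (Q := Q) (zero_add 1)

theorem mul_mem_homogeneousSpan (h : Commute P Q) {x y : A} {m n : ℕ}
    (hx : x ∈ homogeneousSpan R P Q m) (hy : y ∈ homogeneousSpan R P Q n) :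
    x * y ∈ homogeneousSpan R P Q (m + n) := by
  induction hx, hy using Submodule.span_induction₂ with
  | mem_mem x y hx hy =>
    obtain ⟨a, b, rfl, rfl⟩ := hx
    obtain ⟨c, d, rfl, rfl⟩ := hy
    rw [(h.symm.pow_pow b c).mul_mul_mul_comm, ← pow_add, ← pow_add]
    exact pow_mul_pow_mem_homogeneousSpan (by omega)
  | zero_left y _ => simp
  | zero_right x _ => simp
  | add_left x y z _ _ _ hxz hyz => rw [add_mul]; exact add_mem hxz hyz
  | add_right x y z _ _ _ hxy hxz => rw [mul_add]; exact add_mem hxy hxz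
  | smul_left r x y _ _ hxy => rw [smul_mul_assoc]; exact Submodule.smul_mem _ r hxy
  | smul_right r x y _ _ hxy => rw [mul_smul_comm]; exact Submodule.smul_mem _ r hxy

theorem pow_mem_homogeneousSpan (h : Commute P Q) {x : A} {m : ℕ}
    (hx : x ∈ homogeneousSpan R P Q m) (i : ℕ) : x ^ i ∈ homogeneousSpan R P Q (m * i) := by
  induction i with
  | zero => simpa using pow_mul_pow_mem_homogeneousSpan (R := R) (P := P) (Q := Q) (zero_add 0)
  | succ i ih => rw [pow_succ, Nat.mul_succ]; exact mul_mem_homogeneousSpan h ih hx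

theorem commute_of_mem_homogeneousSpan (h : Commute P Q) {x y : A} {m n : ℕ}
    (hx : x ∈ homogeneousSpan R P Q m) (hy : y ∈ homogeneousSpan R P Q n) : Commute x y := by
  induction hx, hy using Submodule.span_induction₂ with
  | mem_mem x y hx hy =>
    obtain ⟨a, b, -, rfl⟩ := hx
    obtain ⟨c, d, -, rfl⟩ := hy
    exact ((Commute.pow_pow_self P a c).mul_right (h.pow_pow a d)).mul_left
      ((h.symm.pow_pow b c).mul_right (Commute.pow_pow_self Q b d))
  | zero_left y _ => exact Commute.zero_left y
  | zero_right x _ => exact Commute.zero_right x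
  | add_left x y z _ _ _ hxz hyz => exact hxz.add_left hyz
  | add_right x y z _ _ _ hxy hxz => exact hxy.add_right hxz
  | smul_left r x y _ _ hxy => exact hxy.smul_left r
  | smul_right r x y _ _ hxy => exact hxy.smul_right r

theorem apply_eq_zero_of_mem_homogeneousSpan {M : Type*} [AddCommMonoid M] [Module R M]
    {P Q T : Module.End R M} {m : ℕ} {v : M} (hT : T ∈ homogeneousSpan R P Q m)
    (hv : ∀ a b, a + b = m → (P ^ a * Q ^ b) v = 0) : T v = 0 := by
  induction hT using Submodule.span_induction with
  | mem x hx => obtain ⟨a, b, hab, rfl⟩ := hx; exact hv a b hab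
  | zero => rfl
  | add x y _ _ hx hy => rw [LinearMap.add_apply, hx, hy, add_zero]
  | smul r x _ hx => rw [LinearMap.smul_apply, hx, smul_zero]

end HomogeneousSpan

section Tensor

variable (R : Type*) [CommSemiring R]

def derivLeft : Module.End R (R[X] ⊗[R] R[X]) := (derivative : Module.End R R[X]).rTensor R[X]

def derivRight : Module.End R (R[X] ⊗[R] R[X]) := (derivative : Module.End R R[X]).lTensor R[X]

variable {R}

theorem derivative_comp_mul' :
    derivative ∘ₗ LinearMap.mul' R R[X] = LinearMap.mul' R R[X] ∘ₗ (derivLeft R + derivRight R) :=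
  TensorProduct.ext' fun f g => by simp [derivLeft, derivRight, derivative_mul]

theorem commute_derivLeft_derivRight : Commute (derivLeft R) (derivRight R) :=
  (LinearMap.rTensor_comp_lTensor (f := derivative) (g := derivative)).trans
    (LinearMap.lTensor_comp_rTensor (f := derivative) (g := derivative)).symm

theorem derivLeft_pow_mul_derivRight_pow_tmul (a b : ℕ) (f g : R[X]) :
    (derivLeft R ^ a * derivRight R ^ b) (f ⊗ₜ g) = derivative^[a] f ⊗ₜ derivative^[b] g := by
  rw [derivLeft, derivRight, LinearMap.rTensor_pow, LinearMap.lTensor_pow, Module.End.mul_apply,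
    LinearMap.lTensor_tmul, LinearMap.rTensor_tmul, Module.End.pow_apply, Module.End.pow_apply]

theorem apply_tmul_eq_zero_of_mem_homogeneousSpan {T : Module.End R (R[X] ⊗[R] R[X])} {m : ℕ}
    (hT : T ∈ homogeneousSpan R (derivLeft R) (derivRight R) m) {f g : R[X]}
    (hm : f.natDegree + g.natDegree < m) : T (f ⊗ₜ g) = 0 :=
  apply_eq_zero_of_mem_homogeneousSpan hT fun a b hab => by
    rw [derivLeft_pow_mul_derivRight_pow_tmul]
    rcases (show f.natDegree < a ∨ g.natDegree < b by omega) with h | h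
    · rw [iterate_derivative_eq_zero h, zero_tmul]
    · rw [iterate_derivative_eq_zero h, tmul_zero]

theorem smul_derivative_sq_pow_apply (s : R) (k : ℕ) (f : R[X]) :
    ((s • derivative ^ 2 : Module.End R R[X]) ^ k) f = s ^ k • derivative^[2 * k] f := by
  rw [_root_.smul_pow, ← pow_mul, LinearMap.smul_apply, Module.End.pow_apply]

end Tensor

section Field

variable {𝕜 : Type*} [Field 𝕜]

theorem truncExp_add_apply_tmul [CharZero 𝕜] {A B : Module.End 𝕜 (𝕜[X] ⊗[𝕜] 𝕜[X])}
    (hA : A ∈ homogeneousSpan 𝕜 (derivLeft 𝕜) (derivRight 𝕜) 2)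
    (hB : B ∈ homogeneousSpan 𝕜 (derivLeft 𝕜) (derivRight 𝕜) 2) {N : ℕ} {f g : 𝕜[X]}
    (hN : f.natDegree + g.natDegree < N) :
    truncExp (A + B) N (f ⊗ₜ g) = truncExp A N (truncExp B N (f ⊗ₜ g)) :=
  have h := commute_derivLeft_derivRight (R := 𝕜)
  truncExp_add_apply (commute_of_mem_homogeneousSpan h hA hB) fun i j hij =>
    apply_tmul_eq_zero_of_mem_homogeneousSpan
      (mul_mem_homogeneousSpan h (pow_mem_homogeneousSpan h hA i) (pow_mem_homogeneousSpan h hB j))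
      (by omega)

theorem truncExp_smul_derivative_sq_mul' (s : 𝕜) (N : ℕ) (y : 𝕜[X] ⊗[𝕜] 𝕜[X]) :
    truncExp (s • derivative ^ 2) N (LinearMap.mul' 𝕜 𝕜[X] y) =
      LinearMap.mul' 𝕜 𝕜[X] (truncExp (s • (derivLeft 𝕜 + derivRight 𝕜) ^ 2) N y) :=
  truncExp_apply_of_comp_eq (by
    rw [LinearMap.smul_comp, LinearMap.comp_smul,
      Module.End.commute_pow_left_of_commute derivative_comp_mul']) N y

theorem truncExp_smul_derivLeft_sq_add_tmul [CharZero 𝕜] (s : 𝕜) {N : ℕ} {f g : 𝕜[X]}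
    (hN : f.natDegree + g.natDegree < N) :
    truncExp (s • derivLeft 𝕜 ^ 2 + s • derivRight 𝕜 ^ 2) N (f ⊗ₜ g) =
      truncExp (s • derivative ^ 2) N f ⊗ₜ truncExp (s • derivative ^ 2) N g := by
  have h := commute_derivLeft_derivRight (R := 𝕜)
  have hL : s • derivLeft 𝕜 ^ 2 = (s • derivative ^ 2 : Module.End 𝕜 𝕜[X]).rTensor 𝕜[X] := by
    rw [LinearMap.rTensor_smul, ← LinearMap.rTensor_pow]
    rfl
  have hR : s • derivRight 𝕜 ^ 2 = (s • derivative ^ 2 : Module.End 𝕜 𝕜[X]).lTensor 𝕜[X] := by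
    rw [LinearMap.lTensor_smul, ← LinearMap.lTensor_pow]
    rfl
  rw [truncExp_add_apply_tmul
      (Submodule.smul_mem _ s (pow_mem_homogeneousSpan (m := 1) h left_mem_homogeneousSpan 2))
      (Submodule.smul_mem _ s (pow_mem_homogeneousSpan (m := 1) h right_mem_homogeneousSpan 2)) hN,
    hL, hR, truncExp_rTensor, truncExp_lTensor, LinearMap.lTensor_tmul, LinearMap.rTensor_tmul]

theorem truncExp_smul_add_sq_truncExp_smul_mul_tmul [CharZero 𝕜] (s c : 𝕜) {N : ℕ} {f g : 𝕜[X]}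
    (hN : f.natDegree + g.natDegree < N) :
    truncExp (s • (derivLeft 𝕜 + derivRight 𝕜) ^ 2) N
        (truncExp (c • (derivLeft 𝕜 * derivRight 𝕜)) N (f ⊗ₜ g)) =
      truncExp ((c + 2 * s) • (derivLeft 𝕜 * derivRight 𝕜)) N
        (truncExp (s • derivLeft 𝕜 ^ 2 + s • derivRight 𝕜 ^ 2) N (f ⊗ₜ g)) := by
  have h := commute_derivLeft_derivRight (R := 𝕜)
  have hmul (r : 𝕜) : r • (derivLeft 𝕜 * derivRight 𝕜) ∈
      homogeneousSpan 𝕜 (derivLeft 𝕜) (derivRight 𝕜) 2 :=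
    Submodule.smul_mem _ r (mul_mem_homogeneousSpan (m := 1) (n := 1) h
      left_mem_homogeneousSpan right_mem_homogeneousSpan)
  have hsq : s • (derivLeft 𝕜 + derivRight 𝕜) ^ 2 ∈
      homogeneousSpan 𝕜 (derivLeft 𝕜) (derivRight 𝕜) 2 :=
    Submodule.smul_mem _ s (pow_mem_homogeneousSpan (m := 1) h
      (add_mem left_mem_homogeneousSpan right_mem_homogeneousSpan) 2)
  have hsq_add_sq : s • derivLeft 𝕜 ^ 2 + s • derivRight 𝕜 ^ 2 ∈
      homogeneousSpan 𝕜 (derivLeft 𝕜) (derivRight 𝕜) 2 :=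
    add_mem (Submodule.smul_mem _ s (pow_mem_homogeneousSpan (m := 1) h left_mem_homogeneousSpan 2))
      (Submodule.smul_mem _ s (pow_mem_homogeneousSpan (m := 1) h right_mem_homogeneousSpan 2))
  have hsplit : s • (derivLeft 𝕜 + derivRight 𝕜) ^ 2 + c • (derivLeft 𝕜 * derivRight 𝕜) =
      (c + 2 * s) • (derivLeft 𝕜 * derivRight 𝕜) +
        (s • derivLeft 𝕜 ^ 2 + s • derivRight 𝕜 ^ 2) := by
    rw [sq, sq, sq, add_mul, mul_add, mul_add, ← h.eq]
    module
  rw [← truncExp_add_apply_tmul hsq (hmul c) hN, hsplit,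
    truncExp_add_apply_tmul (hmul _) hsq_add_sq hN]

end Field

theorem natDegree_alphaMap_le (c c' : ℝ) (f : ℝ[X]) :
    (alphaMap c c' f).natDegree ≤ f.natDegree :=
  natDegree_sum_le_of_forall_le _ _ fun _ _ =>
    (natDegree_smul_le _ _).trans ((natDegree_iterate_derivative _ _).trans (Nat.sub_le _ _))

theorem natDegree_starProd_le (c : ℝ) (f g : ℝ[X]) :
    (starProd c f g).natDegree ≤ f.natDegree + g.natDegree :=
  natDegree_sum_le_of_forall_le _ _ fun _ _ => (natDegree_smul_le _ _).trans <|
    natDegree_mul_le.trans <| add_le_add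
      ((natDegree_iterate_derivative _ _).trans (Nat.sub_le _ _))
      ((natDegree_iterate_derivative _ _).trans (Nat.sub_le _ _))

theorem alphaMap_eq_truncExp (c c' : ℝ) {f : ℝ[X]} {N : ℕ} (hN : f.natDegree < N) :
    alphaMap c c' f = truncExp (((c' - c) / 2) • derivative ^ 2) N f := by
  rw [truncExp_apply_eq_of_le hN fun k hk => ?_, truncExp_apply, alphaMap]
  · refine sum_congr rfl fun k _ => ?_
    rw [smul_derivative_sq_pow_apply, smul_smul, div_pow]
    congr 1
    ring
  · rw [smul_derivative_sq_pow_apply, iterate_derivative_eq_zero (by omega), smul_zero]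

theorem starProd_eq_mul'_truncExp (c : ℝ) {f g : ℝ[X]} {N : ℕ}
    (hN : f.natDegree + g.natDegree < N) :
    starProd c f g =
      LinearMap.mul' ℝ ℝ[X] (truncExp (c • (derivLeft ℝ * derivRight ℝ)) N (f ⊗ₜ g)) := by
  have hpow (k : ℕ) : ((c • (derivLeft ℝ * derivRight ℝ)) ^ k) (f ⊗ₜ g) =
      c ^ k • (derivative^[k] f ⊗ₜ derivative^[k] g) := by
    rw [_root_.smul_pow, commute_derivLeft_derivRight.mul_pow, LinearMap.smul_apply,
      derivLeft_pow_mul_derivRight_pow_tmul]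
  rw [truncExp_apply_eq_of_le hN fun k hk => ?_, truncExp_apply, map_sum, starProd]
  · refine sum_congr rfl fun k _ => ?_
    rw [hpow, smul_smul, map_smul, LinearMap.mul'_apply, div_eq_inv_mul]
  · rw [hpow, iterate_derivative_eq_zero (by omega : f.natDegree < k), zero_tmul, smul_zero]

theorem alphaMap_add (c c' : ℝ) (f g : ℝ[X]) :
    alphaMap c c' (f + g) = alphaMap c c' f + alphaMap c c' g := by
  obtain ⟨N, hN⟩ : ∃ N, (f + g).natDegree + f.natDegree + g.natDegree < N := ⟨_, Nat.lt_succ_self _⟩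
  rw [alphaMap_eq_truncExp c c' (N := N) (by omega), alphaMap_eq_truncExp c c' (N := N) (by omega),
    alphaMap_eq_truncExp c c' (N := N) (by omega), map_add]

theorem alphaMap_smul (c c' a : ℝ) (f : ℝ[X]) : alphaMap c c' (a • f) = a • alphaMap c c' f := by
  rw [alphaMap_eq_truncExp c c' ((natDegree_smul_le a f).trans_lt (Nat.lt_succ_self _)),
    alphaMap_eq_truncExp c c' (Nat.lt_succ_self _), map_smul]

theorem alphaMap_alphaMap (c c' : ℝ) (f : ℝ[X]) : alphaMap c' c (alphaMap c c' f) = f := by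
  have hf := Nat.lt_succ_self f.natDegree
  have hvanish (i j : ℕ) (hij : f.natDegree + 1 ≤ i + j) :
      ((((c - c') / 2) • derivative ^ 2) ^ i * (((c' - c) / 2) • derivative ^ 2) ^ j :
        Module.End ℝ ℝ[X]) f = 0 := by
    rw [Module.End.mul_apply, smul_derivative_sq_pow_apply, smul_derivative_sq_pow_apply,
      iterate_derivative_smul, ← Function.iterate_add_apply,
      iterate_derivative_eq_zero (by omega), smul_zero, smul_zero]
  rw [alphaMap_eq_truncExp c' c ((natDegree_alphaMap_le c c' f).trans_lt hf),
    alphaMap_eq_truncExp c c' hf,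
    ← truncExp_add_apply (((Commute.refl _).smul_left _).smul_right _) hvanish,
    ← add_smul, show (c - c') / 2 + (c' - c) / 2 = 0 by ring, zero_smul,
    truncExp_zero (Nat.succ_pos _), Module.End.one_apply]

theorem alphaMap_starProd (c c' : ℝ) (f g : ℝ[X]) :
    alphaMap c c' (starProd c f g) = starProd c' (alphaMap c c' f) (alphaMap c c' g) := by
  obtain ⟨N, hN⟩ : ∃ N, f.natDegree + g.natDegree < N := ⟨_, Nat.lt_succ_self _⟩
  have hα : (alphaMap c c' f).natDegree + (alphaMap c c' g).natDegree < N :=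
    (add_le_add (natDegree_alphaMap_le c c' f) (natDegree_alphaMap_le c c' g)).trans_lt hN
  calc alphaMap c c' (starProd c f g)
      = LinearMap.mul' ℝ ℝ[X] (truncExp (((c' - c) / 2) • (derivLeft ℝ + derivRight ℝ) ^ 2) N
          (truncExp (c • (derivLeft ℝ * derivRight ℝ)) N (f ⊗ₜ g))) := by
        rw [alphaMap_eq_truncExp c c' ((natDegree_starProd_le c f g).trans_lt hN),
          starProd_eq_mul'_truncExp c hN, truncExp_smul_derivative_sq_mul']
    _ = LinearMap.mul' ℝ ℝ[X] (truncExp (c' • (derivLeft ℝ * derivRight ℝ)) N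
          (alphaMap c c' f ⊗ₜ alphaMap c c' g)) := by
        rw [truncExp_smul_add_sq_truncExp_smul_mul_tmul _ _ hN,
          truncExp_smul_derivLeft_sq_add_tmul _ hN, ← alphaMap_eq_truncExp c c' (by omega),
          ← alphaMap_eq_truncExp c c' (by omega), show c + 2 * ((c' - c) / 2) = c' by ring]
    _ = starProd c' (alphaMap c c' f) (alphaMap c c' g) := (starProd_eq_mul'_truncExp c' hα).symm

end

theorem alphaMap_algebra_iso (c c' : ℝ) :
    Function.Bijective (alphaMap c c') ∧
    (∀ f g : Polynomial ℝ, alphaMap c c' (f + g) = alphaMap c c' f + alphaMap c c' g) ∧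
    (∀ (a : ℝ) (f : Polynomial ℝ), alphaMap c c' (a • f) = a • alphaMap c c' f) ∧
    (∀ f g : Polynomial ℝ,
      alphaMap c c' (starProd c f g) = starProd c' (alphaMap c c' f) (alphaMap c c' g)) :=
  ⟨Function.bijective_iff_has_inverse.2
      ⟨alphaMap c' c, alphaMap_alphaMap c c', alphaMap_alphaMap c' c⟩,
    alphaMap_add c c', alphaMap_smul c c', alphaMap_starProd c c'⟩
end
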